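/- arXiv:2010.11097 — 6 statements merged into one kernel-verified Lean document; each statement's English description precedes it below -/
import Mathlib

section
/- The intersection of a zonotope Z = {c + Gβ : ‖β‖_∞ ≤ 1} with a family of m strips P_j = {x : |H_j x − y_j| ≤ R_j} is contained in the zonotope with center c̄ = c + Σ_j λ_j (y_j − H_j c) and generator matrix Ḡ = [(I − Σ_j λ_j H_j) G, λ_1 R_1, …, λ_m R_m], for any choice of matrices λ_j ∈ ℝ^{n×p}. That is, for every x with x ∈ Z and x ∈ P_j for all j, there exists γ with ‖γ‖_∞ ≤ 1 such that x = c̄ + Ḡ γ. -/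
open Matrix

/-- Zonotope {c + Gβ : ‖β‖_∞ ≤ 1}. -/
def zonotope {n : ℕ} {ι : Type*} [Fintype ι] (c : Fin n → ℝ)
    (G : Matrix (Fin n) ι ℝ) : Set (Fin n → ℝ) :=
  {x | ∃ β : ι → ℝ, (∀ i, |β i| ≤ 1) ∧ x = c + G.mulVec β}

/-- the intersection of a zonotope with m strips is contained in
the zonotope with center c̄ and generators Ḡ = [(I − Σ λ_j H_j)G, λ_1 R_1, …, λ_m R_m]. -/
theorem zonotope_strips_intersection_subset
    {n e m p : ℕ}
    (c : Fin n → ℝ) (G : Matrix (Fin n) (Fin e) ℝ)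
    (H : Fin m → Matrix (Fin p) (Fin n) ℝ)
    (y : Fin m → (Fin p → ℝ)) (R : Fin m → ℝ)
    (lam : Fin m → Matrix (Fin n) (Fin p) ℝ)
    (x : Fin n → ℝ)
    (hxZ : x ∈ zonotope c G)
    (hxP : ∀ j : Fin m, ∃ d : Fin p → ℝ, (∀ i, |d i| ≤ 1) ∧
      (H j).mulVec x = y j + R j • d) :
    ∃ γ : (Fin e ⊕ Fin m × Fin p) → ℝ, (∀ i, |γ i| ≤ 1) ∧
      x = (c + ∑ j, (lam j).mulVec (y j - (H j).mulVec c)) +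
        (Matrix.fromCols (((1 : Matrix (Fin n) (Fin n) ℝ) - ∑ j, lam j * H j) * G)
          (Matrix.of fun i (jk : Fin m × Fin p) => R jk.1 * lam jk.1 i jk.2)).mulVec γ := by
  obtain ⟨β, hβ, hx⟩ := hxZ
  choose d hd hHd using hxP
  refine ⟨Sum.elim β (fun jk => d jk.1 jk.2), ?_, ?_⟩
  · rintro (i | ⟨j, k⟩)
    · exact hβ i
    · exact hd j k
  · have hB : (Matrix.of fun i (jk : Fin m × Fin p) => R jk.1 * lam jk.1 i jk.2).mulVec
        (fun jk => d jk.1 jk.2) = ∑ j, R j • (lam j).mulVec (d j) := by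
      funext i
      simp only [Matrix.mulVec, dotProduct, Matrix.of_apply, Fintype.sum_prod_type,
        Finset.sum_apply, Pi.smul_apply, smul_eq_mul, Finset.mul_sum]
      exact Finset.sum_congr rfl fun j _ => Finset.sum_congr rfl fun k _ => by ring
    have key : ∀ j : Fin m, (lam j).mulVec (y j - (H j).mulVec c) + R j • (lam j).mulVec (d j)
        = (lam j).mulVec ((H j).mulVec (G.mulVec β)) := by
      intro j
      have h := hHd j
      rw [hx, Matrix.mulVec_add] at h
      have hy : y j = (H j).mulVec c + (H j).mulVec (G.mulVec β) - R j • d j :=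
        eq_sub_of_add_eq h.symm
      rw [hy, Matrix.mulVec_sub, Matrix.mulVec_sub, Matrix.mulVec_add, Matrix.mulVec_smul]
      abel
    have hsv : (∑ j, lam j * H j * G).mulVec β = ∑ j, (lam j * H j * G).mulVec β := by
      funext i
      simp only [Matrix.mulVec, dotProduct, Finset.sum_apply, Matrix.sum_apply, Finset.sum_mul]
      rw [Finset.sum_comm]
    rw [Matrix.fromCols_mulVec_sumElim, hB, Matrix.sub_mul, Matrix.one_mul,
      Matrix.sub_mulVec, Matrix.sum_mul, hsv]
    simp only [← Matrix.mulVec_mulVec]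
    have hsum : (∑ j, (lam j).mulVec (y j - (H j).mulVec c)) + (∑ j, R j • (lam j).mulVec (d j))
        = ∑ j, (lam j).mulVec ((H j).mulVec (G.mulVec β)) := by
      rw [← Finset.sum_add_distrib]
      exact Finset.sum_congr rfl fun j _ => key j
    rw [hx, ← hsum]
    abel
end

section
/- The intersection of a constrained zonotope Ĉ = ⟨ĉ, Ĝ, Â, b̂⟩ with a family of m strips P_j = {x : H_j x = y_j + R_j d_j for some ‖d_j‖_∞ ≤ 1} equals exactly the constrained zonotope C̄ = ⟨c̄, Ḡ, Ā, b̄⟩, where for any fixed matrices λ_j: c̄ = ĉ + Σ_j λ_j (y_j − H_j ĉ); Ḡ = [(I − Σ_j λ_j H_j) Ĝ, λ_1 R_1, …, λ_m R_m]; Ā is the block matrix with rows [Â, 0, …, 0] and [H_j Ĝ, 0, …, −R_j, …, 0] for each j; and b̄ = (b̂, y_1 − H_1 ĉ, …, y_m − H_m ĉ). That is, x ∈ Ĉ ∩ P_1 ∩ … ∩ P_m if and only if x ∈ C̄. -/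
open Matrix

lemma sum_mulVec' {k m n : Type*} [Fintype k] [Fintype n]
    (A : k → Matrix m n ℝ) (v : n → ℝ) :
    (∑ j, A j) *ᵥ v = ∑ j, (A j) *ᵥ v := by
  funext i
  simp only [Matrix.mulVec, dotProduct, Matrix.sum_apply, Finset.sum_apply,
    Finset.sum_mul]
  rw [Finset.sum_comm]

/-- Constrained zonotope {c + Gβ : Aβ = b, ‖β‖_∞ ≤ 1}. -/
def conZonotope {n : ℕ} {ι κ : Type*} [Fintype ι] [Fintype κ]
    (c : Fin n → ℝ) (G : Matrix (Fin n) ι ℝ)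
    (A : Matrix κ ι ℝ) (b : κ → ℝ) : Set (Fin n → ℝ) :=
  {x | ∃ β : ι → ℝ, (∀ i, |β i| ≤ 1) ∧ A.mulVec β = b ∧ x = c + G.mulVec β}

/-- intersection of a constrained zonotope with m strips equals
the constrained zonotope ⟨c̄, Ḡ, Ā, b̄⟩. -/
theorem conZonotope_strips_intersection
    {n ng nc m p : ℕ}
    (ch : Fin n → ℝ) (Gh : Matrix (Fin n) (Fin ng) ℝ)
    (Ah : Matrix (Fin nc) (Fin ng) ℝ) (bh : Fin nc → ℝ)
    (H : Fin m → Matrix (Fin p) (Fin n) ℝ)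
    (y : Fin m → (Fin p → ℝ)) (R : Fin m → ℝ)
    (lam : Fin m → Matrix (Fin n) (Fin p) ℝ)
    (x : Fin n → ℝ) :
    (x ∈ conZonotope ch Gh Ah bh ∧
      ∀ j : Fin m, ∃ d : Fin p → ℝ, (∀ i, |d i| ≤ 1) ∧
        (H j).mulVec x = y j + R j • d) ↔
    x ∈ conZonotope
      (ch + ∑ j, (lam j).mulVec (y j - (H j).mulVec ch))
      (Matrix.fromCols (((1 : Matrix (Fin n) (Fin n) ℝ) - ∑ j, lam j * H j) * Gh)
        (Matrix.of fun i (jk : Fin m × Fin p) => R jk.1 * lam jk.1 i jk.2))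
      (Matrix.of fun (r : Fin nc ⊕ Fin m × Fin p) (col : Fin ng ⊕ Fin m × Fin p) =>
        match r, col with
        | Sum.inl r, Sum.inl cc => Ah r cc
        | Sum.inl _, Sum.inr _ => 0
        | Sum.inr (j, r), Sum.inl cc => (H j * Gh) r cc
        | Sum.inr (j, r), Sum.inr (j', cc) =>
            if j = j' ∧ r = cc then -(R j) else 0)
      (Sum.elim bh (fun jr : Fin m × Fin p => (y jr.1 - (H jr.1).mulVec ch) jr.2)) := by
  have hM : ∀ β : Fin ng → ℝ,
      (((1 : Matrix (Fin n) (Fin n) ℝ) - ∑ j, lam j * H j) * Gh) *ᵥ β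
        = Gh *ᵥ β - ∑ j, (lam j) *ᵥ ((H j) *ᵥ (Gh *ᵥ β)) := by
    intro β
    rw [Matrix.sub_mul, Matrix.one_mul, Matrix.sub_mulVec, Matrix.sum_mul,
      sum_mulVec']
    congr 1
    refine Finset.sum_congr rfl fun j _ => ?_
    rw [Matrix.mul_assoc, ← Matrix.mulVec_mulVec, ← Matrix.mulVec_mulVec]
  have hB : ∀ d : Fin m → Fin p → ℝ,
      (Matrix.of fun i (jk : Fin m × Fin p) => R jk.1 * lam jk.1 i jk.2) *ᵥ
        (fun jk : Fin m × Fin p => d jk.1 jk.2)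
        = ∑ j, (lam j) *ᵥ (R j • d j) := by
    intro d
    funext i
    simp only [Matrix.mulVec, dotProduct, Fintype.sum_prod_type, Matrix.of_apply,
      Finset.sum_apply, Pi.smul_apply, smul_eq_mul]
    exact Finset.sum_congr rfl fun j _ => Finset.sum_congr rfl fun k _ => by ring
  constructor
  · rintro ⟨⟨β, hβ, hA, hx⟩, hP⟩
    choose d hd hH using hP
    refine ⟨Sum.elim β (fun jk => d jk.1 jk.2), ?_, ?_, ?_⟩
    · rintro (i | ⟨j, k⟩)
      · simpa using hβ i
      · simpa using hd j k
    · funext r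
      rcases r with r | ⟨j, r⟩
      · simp only [Matrix.mulVec, dotProduct, Fintype.sum_sum_type,
          Matrix.of_apply, Sum.elim_inl, Sum.elim_inr, zero_mul,
          Finset.sum_const_zero, add_zero]
        exact congrFun hA r
      · simp only [Matrix.mulVec, dotProduct, Fintype.sum_sum_type,
          Matrix.of_apply, Sum.elim_inl, Sum.elim_inr]
        have h2 : ∑ q : Fin m × Fin p,
            (if j = q.1 ∧ r = q.2 then -(R j) else 0) * d q.1 q.2
              = -(R j) * d j r := by
          rw [Finset.sum_eq_single (j, r)]
          · simp
          · rintro ⟨j', cc⟩ _ hne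
            have hc : ¬(j = j' ∧ r = cc) := by
              rintro ⟨rfl, rfl⟩; exact hne rfl
            simp [hc]
          · simp
        rw [h2]
        have h1 : (∑ cc, (H j * Gh) r cc * β cc) = ((H j) *ᵥ (Gh *ᵥ β)) r := by
          rw [Matrix.mulVec_mulVec]; rfl
        rw [h1]
        have hGβ : Gh *ᵥ β = x - ch := by rw [hx]; abel
        rw [hGβ, Matrix.mulVec_sub]
        have := congrFun (hH j) r
        simp only [Pi.sub_apply, Pi.add_apply, Pi.smul_apply, smul_eq_mul] at this ⊢
        rw [this]; ring
    · rw [fromCols_mulVec_sumElim, hB, hM, hx]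
      have key : ∀ j, (lam j) *ᵥ (y j - (H j) *ᵥ ch)
          - (lam j) *ᵥ ((H j) *ᵥ (Gh *ᵥ β)) + (lam j) *ᵥ (R j • d j) = 0 := by
        intro j
        rw [← Matrix.mulVec_sub, ← Matrix.mulVec_add]
        have h' : y j + R j • d j = (H j) *ᵥ ch + (H j) *ᵥ (Gh *ᵥ β) := by
          rw [← Matrix.mulVec_add, ← hx, hH j]
        have hz : y j - (H j) *ᵥ ch - (H j) *ᵥ (Gh *ᵥ β) + R j • d j = 0 := by
          have : y j + R j • d j - ((H j) *ᵥ ch + (H j) *ᵥ (Gh *ᵥ β)) = 0 := by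
            rw [h']; abel
          calc y j - (H j) *ᵥ ch - (H j) *ᵥ (Gh *ᵥ β) + R j • d j
              = y j + R j • d j - ((H j) *ᵥ ch + (H j) *ᵥ (Gh *ᵥ β)) := by abel
            _ = 0 := this
        rw [hz, Matrix.mulVec_zero]
      have hsum : (∑ j, (lam j) *ᵥ (y j - (H j) *ᵥ ch))
          - (∑ j, (lam j) *ᵥ ((H j) *ᵥ (Gh *ᵥ β)))
          + (∑ j, (lam j) *ᵥ (R j • d j)) = 0 := by
        rw [← Finset.sum_sub_distrib, ← Finset.sum_add_distrib]
        exact Finset.sum_eq_zero fun j _ => key j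
      have expand : (ch + ∑ j, (lam j) *ᵥ (y j - (H j) *ᵥ ch))
          + ((Gh *ᵥ β - ∑ j, (lam j) *ᵥ ((H j) *ᵥ (Gh *ᵥ β)))
            + ∑ j, (lam j) *ᵥ (R j • d j))
          = (ch + Gh *ᵥ β)
            + ((∑ j, (lam j) *ᵥ (y j - (H j) *ᵥ ch))
              - (∑ j, (lam j) *ᵥ ((H j) *ᵥ (Gh *ᵥ β)))
              + (∑ j, (lam j) *ᵥ (R j • d j))) := by abel
      rw [expand, hsum, add_zero]
  · rintro ⟨β', hβ', hA', hx'⟩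
    set β : Fin ng → ℝ := fun cc => β' (Sum.inl cc) with hβdef
    set d : Fin m → Fin p → ℝ := fun j k => β' (Sum.inr (j, k)) with hddef
    have hsplit : Sum.elim β (fun jk : Fin m × Fin p => d jk.1 jk.2) = β' := by
      funext c; rcases c with c | ⟨j, k⟩ <;> rfl
    have hAβ : Ah *ᵥ β = bh := by
      funext r
      have := congrFun hA' (Sum.inl r)
      simpa only [Matrix.mulVec, dotProduct, Fintype.sum_sum_type,
        Matrix.of_apply, zero_mul, Finset.sum_const_zero, add_zero,
        Sum.elim_inl] using this
    have hd : ∀ j, R j • d j = (H j) *ᵥ (Gh *ᵥ β) - (y j - (H j) *ᵥ ch) := by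
      intro j
      funext r
      have := congrFun hA' (Sum.inr (j, r))
      simp only [Matrix.mulVec, dotProduct, Fintype.sum_sum_type,
        Matrix.of_apply, Sum.elim_inr] at this
      have h2 : ∑ q : Fin m × Fin p,
          (if j = q.1 ∧ r = q.2 then -(R j) else 0) * β' (Sum.inr q)
            = -(R j) * d j r := by
        rw [Finset.sum_eq_single (j, r)]
        · simp [hddef]
        · rintro ⟨j', cc⟩ _ hne
          have hc : ¬(j = j' ∧ r = cc) := by
            rintro ⟨rfl, rfl⟩; exact hne rfl
          simp [hc]
        · simp
      rw [h2] at this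
      have h1 : (∑ cc, (H j * Gh) r cc * β' (Sum.inl cc))
          = ((H j) *ᵥ (Gh *ᵥ β)) r := by
        rw [Matrix.mulVec_mulVec]; rfl
      rw [h1] at this
      simp only [Pi.sub_apply] at this
      simp only [Pi.smul_apply, smul_eq_mul, Pi.sub_apply]
      linarith [this]
    have hxval : x = ch + Gh *ᵥ β := by
      rw [hx', ← hsplit, fromCols_mulVec_sumElim, hB, hM]
      have key : ∀ j, (lam j) *ᵥ (y j - (H j) *ᵥ ch)
          - (lam j) *ᵥ ((H j) *ᵥ (Gh *ᵥ β)) + (lam j) *ᵥ (R j • d j) = 0 := by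
        intro j
        rw [hd j, ← Matrix.mulVec_sub, ← Matrix.mulVec_add]
        have hz : y j - (H j) *ᵥ ch - (H j) *ᵥ (Gh *ᵥ β)
            + ((H j) *ᵥ (Gh *ᵥ β) - (y j - (H j) *ᵥ ch)) = 0 := by abel
        rw [hz, Matrix.mulVec_zero]
      have hsum : (∑ j, (lam j) *ᵥ (y j - (H j) *ᵥ ch))
          - (∑ j, (lam j) *ᵥ ((H j) *ᵥ (Gh *ᵥ β)))
          + (∑ j, (lam j) *ᵥ (R j • d j)) = 0 := by
        rw [← Finset.sum_sub_distrib, ← Finset.sum_add_distrib]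
        exact Finset.sum_eq_zero fun j _ => key j
      have expand : (ch + ∑ j, (lam j) *ᵥ (y j - (H j) *ᵥ ch))
          + ((Gh *ᵥ β - ∑ j, (lam j) *ᵥ ((H j) *ᵥ (Gh *ᵥ β)))
            + ∑ j, (lam j) *ᵥ (R j • d j))
          = (ch + Gh *ᵥ β)
            + ((∑ j, (lam j) *ᵥ (y j - (H j) *ᵥ ch))
              - (∑ j, (lam j) *ᵥ ((H j) *ᵥ (Gh *ᵥ β)))
              + (∑ j, (lam j) *ᵥ (R j • d j))) := by abel
      rw [expand, hsum, add_zero]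
    refine ⟨⟨β, fun i => hβ' (Sum.inl i), hAβ, hxval⟩, fun j =>
      ⟨d j, fun k => hβ' (Sum.inr (j, k)), ?_⟩⟩
    rw [hxval, Matrix.mulVec_add, hd j]
    abel
end

section
/- The intersection of d zonotopes Z_j = ⟨c_j, G_j⟩, j = 1,…,d, is contained in the zonotope Ż = ⟨ċ, Ġ⟩ with ċ = (Σ_j w_j c_j)/(Σ_j w_j) and Ġ = (1/Σ_j w_j)[w_1 G_1, …, w_d G_d], for any real weights w_j with Σ_j w_j ≠ 0 and all w_j ≥ 0 not all zero (or more generally weights whose sum is nonzero and for which each w_j/Σ w_j ∈ [0,1] with the ratios summing to 1). -/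
open Matrix

/-- the intersection of d zonotopes is contained in the
weighted-average zonotope ⟨ċ, Ġ⟩. -/
theorem zonotope_intersection_subset_weighted
    {n e d : ℕ}
    (c : Fin d → (Fin n → ℝ)) (G : Fin d → Matrix (Fin n) (Fin e) ℝ)
    (w : Fin d → ℝ) (hw : ∀ j, 0 ≤ w j) (hsum : 0 < ∑ j, w j)
    (x : Fin n → ℝ) (hx : ∀ j, x ∈ zonotope (c j) (G j)) :
    x ∈ zonotope
      ((∑ j, w j)⁻¹ • ∑ j, w j • c j)
      (Matrix.of fun i (jk : Fin d × Fin e) =>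
        (∑ j, w j)⁻¹ * (w jk.1 * G jk.1 i jk.2)) := by
  choose β hβ hxeq using hx
  refine ⟨fun jk => β jk.1 jk.2, fun jk => hβ jk.1 jk.2, ?_⟩
  funext i
  have hne : (∑ j, w j) ≠ 0 := ne_of_gt hsum
  have key : ∀ j, x i = c j i + ∑ k, G j i k * β j k := by
    intro j
    have := congrFun (hxeq j) i
    simpa [Matrix.mulVec, dotProduct] using this
  have : (∑ j, w j) * x i =
      ∑ j, w j * (c j i + ∑ k, G j i k * β j k) := by
    rw [Finset.sum_mul]
    exact Finset.sum_congr rfl fun j _ => by rw [← key j]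
  have hx' : x i = (∑ j, w j)⁻¹ * ∑ j, w j * (c j i + ∑ k, G j i k * β j k) := by
    rw [eq_inv_mul_iff_mul_eq₀ hne]; exact this
  rw [hx']
  simp only [Pi.add_apply, Pi.smul_apply, Finset.sum_apply, smul_eq_mul,
    Matrix.mulVec, dotProduct, Matrix.of_apply]
  rw [Fintype.sum_prod_type]
  simp only [Finset.mul_sum, mul_add]
  rw [← Finset.sum_add_distrib]
  refine Finset.sum_congr rfl fun j _ => ?_
  congr 1
  exact Finset.sum_congr rfl fun k _ => by ring
end

section
/- The intersection of d constrained zonotopes C_j = ⟨c_j, G_j, A_j, b_j⟩ equals exactly the constrained zonotope ⟨ċ, Ġ, Ȧ, ḃ⟩ where ċ = c_1, Ġ = [G_1, 0, …, 0], Ȧ is block diagonal in A_1,…,A_d augmented with rows [G_1, −G_j, 0…] for j = 2,…,d, and ḃ = (b_1, …, b_d, c_2 − c_1, …, c_d − c_1). That is, x ∈ C_1 ∩ … ∩ C_d if and only if x ∈ ⟨ċ, Ġ, Ȧ, ḃ⟩. -/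
open Matrix

private lemma sum_collapse_one {d ng : ℕ} (j0 : Fin d) (h : Fin ng → ℝ)
    (g : Fin d × Fin ng → ℝ) :
    ∑ p : Fin d × Fin ng, (if p.1 = j0 then h p.2 else 0) * g p
      = ∑ k, h k * g (j0, k) := by
  rw [Fintype.sum_prod_type]
  have : ∀ j : Fin d, (∑ k, (if j = j0 then h k else 0) * g (j, k))
      = if j = j0 then ∑ k, h k * g (j, k) else 0 := by
    intro j; split <;> simp
  rw [Finset.sum_congr rfl (fun j _ => this j),
    Finset.sum_ite_eq' Finset.univ j0 (fun j => ∑ k, h k * g (j, k))]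
  simp

private lemma sum_collapse_two {d ng : ℕ} {j0 j1 : Fin d} (hne : j0 ≠ j1)
    (h0 h1 : Fin ng → ℝ) (g : Fin d × Fin ng → ℝ) :
    ∑ p : Fin d × Fin ng,
        (if p.1 = j0 then h0 p.2 else if p.1 = j1 then h1 p.2 else 0) * g p
      = (∑ k, h0 k * g (j0, k)) + ∑ k, h1 k * g (j1, k) := by
  have : ∀ p : Fin d × Fin ng,
      (if p.1 = j0 then h0 p.2 else if p.1 = j1 then h1 p.2 else 0) * g p
        = (if p.1 = j0 then h0 p.2 else 0) * g p
          + (if p.1 = j1 then h1 p.2 else 0) * g p := by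
    intro p
    by_cases h1' : p.1 = j0
    · simp [h1', hne]
    · by_cases h2' : p.1 = j1 <;> simp [h1', h2', Ne.symm hne]
  rw [Finset.sum_congr rfl (fun p _ => this p), Finset.sum_add_distrib,
    sum_collapse_one, sum_collapse_one]

/-- the intersection of d constrained zonotopes equals the
constrained zonotope ⟨ċ, Ġ, Ȧ, ḃ⟩ (block-diagonal constraints plus coupling rows). -/
theorem conZonotope_intersection_eq
    {n ng nc d : ℕ} (hd : 0 < d)
    (c : Fin d → (Fin n → ℝ)) (G : Fin d → Matrix (Fin n) (Fin ng) ℝ)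
    (A : Fin d → Matrix (Fin nc) (Fin ng) ℝ) (b : Fin d → (Fin nc → ℝ))
    (x : Fin n → ℝ) :
    (∀ j, x ∈ conZonotope (c j) (G j) (A j) (b j)) ↔
    x ∈ conZonotope
      (c ⟨0, hd⟩)
      (Matrix.of fun i (jk : Fin d × Fin ng) =>
        if jk.1 = ⟨0, hd⟩ then G ⟨0, hd⟩ i jk.2 else 0)
      (Matrix.of
        fun (r : (Fin d × Fin nc) ⊕ ({j : Fin d // j ≠ ⟨0, hd⟩} × Fin n))
            (col : Fin d × Fin ng) =>
        match r with
        | Sum.inl (j, rr) => if col.1 = j then A j rr col.2 else 0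
        | Sum.inr (j, rr) =>
            if col.1 = ⟨0, hd⟩ then G ⟨0, hd⟩ rr col.2
            else if col.1 = j.1 then -(G j.1 rr col.2) else 0)
      (Sum.elim (fun jr : Fin d × Fin nc => b jr.1 jr.2)
        (fun jr : {j : Fin d // j ≠ ⟨0, hd⟩} × Fin n =>
          (c jr.1.1 - c ⟨0, hd⟩) jr.2)) := by
  constructor
  · intro h
    choose β hβ1 hβ2 hβ3 using h
    refine ⟨fun jk => β jk.1 jk.2, fun i => hβ1 i.1 i.2, ?_, ?_⟩
    · funext r
      cases r with
      | inl jr =>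
        obtain ⟨j0, rr⟩ := jr
        have := congrFun (hβ2 j0) rr
        simp only [Matrix.mulVec, dotProduct, Matrix.of_apply, Sum.elim_inl] at this ⊢
        rw [sum_collapse_one j0 (fun k => A j0 rr k) (fun p => β p.1 p.2)]
        exact this
      | inr jr =>
        obtain ⟨⟨j0, hj0⟩, rr⟩ := jr
        simp only [Matrix.mulVec, dotProduct, Matrix.of_apply, Sum.elim_inr,
          Pi.sub_apply]
        rw [sum_collapse_two (Ne.symm hj0) (fun k => G ⟨0, hd⟩ rr k)
          (fun k => -(G j0 rr k)) (fun p => β p.1 p.2)]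
        have e0 := congrFun (hβ3 ⟨0, hd⟩) rr
        have e1 := congrFun (hβ3 j0) rr
        simp only [Pi.add_apply, Matrix.mulVec, dotProduct] at e0 e1
        simp only [neg_mul, Finset.sum_neg_distrib]
        linarith
    · funext rr
      have e0 := congrFun (hβ3 ⟨0, hd⟩) rr
      simp only [Pi.add_apply, Matrix.mulVec, dotProduct, Matrix.of_apply] at e0 ⊢
      rw [sum_collapse_one ⟨0, hd⟩ (fun k => G ⟨0, hd⟩ rr k) (fun p => β p.1 p.2)]
      exact e0
  · rintro ⟨γ, hγ1, hγ2, hγ3⟩ j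
    refine ⟨fun k => γ (j, k), fun k => hγ1 (j, k), ?_, ?_⟩
    · funext rr
      have := congrFun hγ2 (Sum.inl (j, rr))
      simp only [Matrix.mulVec, dotProduct, Matrix.of_apply, Sum.elim_inl] at this ⊢
      rw [sum_collapse_one j (fun k => A j rr k) γ] at this
      exact this
    · have hx0 : ∀ rr, x rr = c ⟨0, hd⟩ rr + ∑ k, G ⟨0, hd⟩ rr k * γ (⟨0, hd⟩, k) := by
        intro rr
        have := congrFun hγ3 rr
        simp only [Pi.add_apply, Matrix.mulVec, dotProduct, Matrix.of_apply] at this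
        rwa [sum_collapse_one ⟨0, hd⟩ (fun k => G ⟨0, hd⟩ rr k) γ] at this
      by_cases hj : j = ⟨0, hd⟩
      · subst hj
        funext rr
        simp only [Pi.add_apply, Matrix.mulVec, dotProduct]
        exact hx0 rr
      · funext rr
        have hc := congrFun hγ2 (Sum.inr (⟨j, hj⟩, rr))
        simp only [Matrix.mulVec, dotProduct, Matrix.of_apply, Sum.elim_inr,
          Pi.sub_apply] at hc
        rw [sum_collapse_two (Ne.symm hj) (fun k => G ⟨0, hd⟩ rr k)
          (fun k => -(G j rr k)) γ] at hc
        simp only [neg_mul, Finset.sum_neg_distrib] at hc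
        simp only [Pi.add_apply, Matrix.mulVec, dotProduct]
        have := hx0 rr
        linarith
end

section
/- For two constrained zonotopes, the exactness of the intersection formula: x ∈ ⟨c_1, G_1, A_1, b_1⟩ ∩ ⟨c_2, G_2, A_2, b_2⟩ if and only if there exist β_1, β_2 with ‖β_1‖_∞ ≤ 1, ‖β_2‖_∞ ≤ 1, A_1 β_1 = b_1, A_2 β_2 = b_2, G_1 β_1 − G_2 β_2 = c_2 − c_1, and x = c_1 + G_1 β_1. -/
open Matrix

/-- exactness of the two-constrained-zonotope intersection. -/
theorem conZonotope_pair_intersection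
    {n ng₁ ng₂ nc₁ nc₂ : ℕ}
    (c₁ c₂ : Fin n → ℝ)
    (G₁ : Matrix (Fin n) (Fin ng₁) ℝ) (G₂ : Matrix (Fin n) (Fin ng₂) ℝ)
    (A₁ : Matrix (Fin nc₁) (Fin ng₁) ℝ) (A₂ : Matrix (Fin nc₂) (Fin ng₂) ℝ)
    (b₁ : Fin nc₁ → ℝ) (b₂ : Fin nc₂ → ℝ) (x : Fin n → ℝ) :
    (x ∈ conZonotope c₁ G₁ A₁ b₁ ∧ x ∈ conZonotope c₂ G₂ A₂ b₂) ↔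
    ∃ (β₁ : Fin ng₁ → ℝ) (β₂ : Fin ng₂ → ℝ),
      (∀ i, |β₁ i| ≤ 1) ∧ (∀ i, |β₂ i| ≤ 1) ∧
      A₁.mulVec β₁ = b₁ ∧ A₂.mulVec β₂ = b₂ ∧
      G₁.mulVec β₁ - G₂.mulVec β₂ = c₂ - c₁ ∧
      x = c₁ + G₁.mulVec β₁ := by
  constructor
  · rintro ⟨⟨β₁, h₁, hA₁, hx₁⟩, ⟨β₂, h₂, hA₂, hx₂⟩⟩
    refine ⟨β₁, β₂, h₁, h₂, hA₁, hA₂, ?_, hx₁⟩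
    have : c₁ + G₁.mulVec β₁ = c₂ + G₂.mulVec β₂ := hx₁ ▸ hx₂
    funext i
    have := congrFun this i
    simp only [Pi.add_apply, Pi.sub_apply] at *
    linarith
  · rintro ⟨β₁, β₂, h₁, h₂, hA₁, hA₂, hG, hx⟩
    refine ⟨⟨β₁, h₁, hA₁, hx⟩, ⟨β₂, h₂, hA₂, ?_⟩⟩
    funext i
    have := congrFun hG i
    have := congrFun hx i
    simp only [Pi.add_apply, Pi.sub_apply] at *
    linarith
end

section
/- Constrained zonotopes are closed under linear maps and Minkowski addition: for F ∈ ℝ^{m×n} and constrained zonotopes C_1 = ⟨c_1, G_1, A_1, b_1⟩, C_2 = ⟨c_2, G_2, A_2, b_2⟩ in ℝ^n, one has F(C_1) = ⟨F c_1, F G_1, A_1, b_1⟩ and C_1 ⊕ C_2 = ⟨c_1 + c_2, [G_1, G_2], diag(A_1, A_2), (b_1, b_2)⟩. -/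
open Matrix Pointwise

/-- constrained zonotopes are closed under linear maps and
Minkowski addition. -/
theorem conZonotope_linear_image_and_minkowski
    {n m ng₁ ng₂ nc₁ nc₂ : ℕ}
    (F : Matrix (Fin m) (Fin n) ℝ)
    (c₁ c₂ : Fin n → ℝ)
    (G₁ : Matrix (Fin n) (Fin ng₁) ℝ) (G₂ : Matrix (Fin n) (Fin ng₂) ℝ)
    (A₁ : Matrix (Fin nc₁) (Fin ng₁) ℝ) (A₂ : Matrix (Fin nc₂) (Fin ng₂) ℝ)
    (b₁ : Fin nc₁ → ℝ) (b₂ : Fin nc₂ → ℝ) :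
    F.mulVec '' conZonotope c₁ G₁ A₁ b₁ =
      conZonotope (F.mulVec c₁) (F * G₁) A₁ b₁ ∧
    conZonotope c₁ G₁ A₁ b₁ + conZonotope c₂ G₂ A₂ b₂ =
      conZonotope (c₁ + c₂) (Matrix.fromCols G₁ G₂)
        (Matrix.fromBlocks A₁ 0 0 A₂) (Sum.elim b₁ b₂) := by
  constructor
  · ext y
    constructor
    · rintro ⟨x, ⟨β, hβ, hA, rfl⟩, rfl⟩
      exact ⟨β, hβ, hA, by rw [Matrix.mulVec_add, Matrix.mulVec_mulVec]⟩
    · rintro ⟨β, hβ, hA, rfl⟩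
      exact ⟨c₁ + G₁.mulVec β, ⟨β, hβ, hA, rfl⟩,
        by rw [Matrix.mulVec_add, Matrix.mulVec_mulVec]⟩
  · ext z
    constructor
    · rintro ⟨x, ⟨β, hβ, hA, rfl⟩, y, ⟨γ, hγ, hA', rfl⟩, rfl⟩
      refine ⟨Sum.elim β γ, ?_, ?_, ?_⟩
      · rintro (i | i)
        · exact hβ i
        · exact hγ i
      · rw [Matrix.fromBlocks_mulVec]
        simp [hA, hA']
      · rw [Matrix.fromCols_mulVec_sumElim]
        abel
    · rintro ⟨β, hβ, hA, rfl⟩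
      refine ⟨c₁ + G₁.mulVec (β ∘ Sum.inl), ⟨β ∘ Sum.inl, fun i => hβ _, ?_, rfl⟩,
        c₂ + G₂.mulVec (β ∘ Sum.inr), ⟨β ∘ Sum.inr, fun i => hβ _, ?_, rfl⟩, ?_⟩
      · have := congrFun hA
        rw [Matrix.fromBlocks_mulVec] at hA
        have h1 := congrArg (fun f => f ∘ Sum.inl) hA
        simpa using h1
      · have h2 := congrArg (fun f => f ∘ Sum.inr) hA
        rw [Matrix.fromBlocks_mulVec] at h2
        simpa using h2
      · have : β = Sum.elim (β ∘ Sum.inl) (β ∘ Sum.inr) := by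
          ext (i | i) <;> rfl
        conv_rhs => rw [this, Matrix.fromCols_mulVec_sumElim]
        abel
end
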